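/- Let A := ∪_{i ∈ 3ℤ} [i, i+2) ⊆ ℝ, let ξ₀ be Lebesgue measure restricted to A, and let η₀ be twice Lebesgue measure restricted to ℝ ∖ A. Define τ(s) := inf{t > s : ξ₀[s,t] ≤ η₀[s,t]} (inf ∅ := ∞). Then for every s ∈ [0,2), τ(s) = 3 − s/2; consequently, for every Borel C ⊆ ℝ, ∫ 1{τ(s) ∈ C} 1_{[0,2)}(s) ds = 2·Leb(C ∩ (2,3]), i.e. the image under τ of Lebesgue measure on [0,2) is twice Lebesgue measure on (2,3], and in particular this image does not equal Lebesgue measure on the interval between 2 and 3. -/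
import Mathlib


open MeasureTheory

/-- The allocation `τ(s) := inf{t > s : μ[s,t] ≤ ν[s,t]}`, with `inf ∅ = ∞`,
for a pair of measures `μ, ν` on `ℝ`. -/
noncomputable def tauAlloc (μ ν : Measure ℝ) (s : ℝ) : EReal :=
  sInf (Real.toEReal '' {t : ℝ | s < t ∧ μ (Set.Icc s t) ≤ ν (Set.Icc s t)})

/-- The set `A = ∪_{i ∈ 3ℤ} [i, i+2)`. -/
def exampleSet : Set ℝ :=
  ⋃ i : ℤ, Set.Ico (3 * (i : ℝ)) (3 * (i : ℝ) + 2)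

/-- `ξ₀` is Lebesgue measure restricted to `A`. -/
noncomputable def exampleXi : Measure ℝ := volume.restrict exampleSet

/-- `η₀` is twice Lebesgue measure restricted to `ℝ \ A`. -/
noncomputable def exampleEta : Measure ℝ := (2 : ENNReal) • volume.restrict exampleSetᶜ

lemma exampleSet_meas : MeasurableSet exampleSet :=
  MeasurableSet.iUnion fun _ => measurableSet_Ico

lemma Ico02_subset : Set.Ico (0:ℝ) 2 ⊆ exampleSet := fun x hx =>
  Set.mem_iUnion.2 ⟨0, by simpa using hx⟩

lemma mem_exampleSet_cases {x : ℝ} (hx : x ∈ exampleSet) (h0 : 0 ≤ x) (h3 : x ≤ 3) :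
    x < 2 ∨ x = 3 := by
  obtain ⟨i, h1, h2⟩ := Set.mem_iUnion.1 hx
  rcases le_or_gt i 0 with h | h
  · left
    have hi : (i:ℝ) ≤ 0 := by exact_mod_cast h
    linarith
  · right
    have hi : (1:ℝ) ≤ i := by exact_mod_cast h
    linarith

lemma xi_apply (s t : ℝ) :
    exampleXi (Set.Icc s t) = volume (Set.Icc s t ∩ exampleSet) := by
  simp [exampleXi, Measure.restrict_apply' exampleSet_meas]

lemma eta_apply (s t : ℝ) :
    exampleEta (Set.Icc s t) = 2 * volume (Set.Icc s t ∩ exampleSetᶜ) := by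
  simp [exampleEta, Measure.restrict_apply' exampleSet_meas.compl]

/-- For `0 ≤ s < 2 ≤ t ≤ 3`, `ξ₀[s,t] = 2 - s`. -/
lemma xi_eq {s t : ℝ} (hs0 : 0 ≤ s) (hs2 : s < 2) (ht2 : 2 ≤ t) (ht3 : t ≤ 3) :
    exampleXi (Set.Icc s t) = ENNReal.ofReal (2 - s) := by
  rw [xi_apply]
  apply le_antisymm
  · have hsub : Set.Icc s t ∩ exampleSet ⊆ Set.Ico s 2 ∪ {3} := by
      rintro x ⟨hx1, hx2⟩
      rcases mem_exampleSet_cases hx2 (le_trans hs0 hx1.1) (le_trans hx1.2 ht3) with h | h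
      · exact Or.inl ⟨hx1.1, h⟩
      · exact Or.inr h
    calc volume (Set.Icc s t ∩ exampleSet) ≤ volume (Set.Ico s 2 ∪ {3}) := measure_mono hsub
      _ ≤ volume (Set.Ico s 2) + volume ({3} : Set ℝ) := measure_union_le _ _
      _ = ENNReal.ofReal (2 - s) := by simp [Real.volume_Ico]
  · have hsub : Set.Ico s 2 ⊆ Set.Icc s t ∩ exampleSet := by
      rintro x ⟨hx1, hx2⟩
      exact ⟨⟨hx1, le_trans hx2.le ht2⟩, Ico02_subset ⟨le_trans hs0 hx1, hx2⟩⟩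
    calc ENNReal.ofReal (2 - s) = volume (Set.Ico s 2) := by simp [Real.volume_Ico]
      _ ≤ _ := measure_mono hsub

/-- For `0 ≤ s < 2 ≤ t ≤ 3`, `η₀[s,t] = 2(t - 2)`. -/
lemma eta_eq {s t : ℝ} (hs0 : 0 ≤ s) (hs2 : s < 2) (ht2 : 2 ≤ t) (ht3 : t ≤ 3) :
    exampleEta (Set.Icc s t) = 2 * ENNReal.ofReal (t - 2) := by
  rw [eta_apply]
  congr 1
  apply le_antisymm
  · have hsub : Set.Icc s t ∩ exampleSetᶜ ⊆ Set.Icc 2 t := by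
      rintro x ⟨hx1, hx2⟩
      refine ⟨?_, hx1.2⟩
      by_contra h
      exact hx2 (Ico02_subset ⟨le_trans hs0 hx1.1, lt_of_not_ge h⟩)
    calc volume (Set.Icc s t ∩ exampleSetᶜ) ≤ volume (Set.Icc 2 t) := measure_mono hsub
      _ = ENNReal.ofReal (t - 2) := by simp [Real.volume_Icc]
  · have hsub : Set.Ioc 2 t \ {3} ⊆ Set.Icc s t ∩ exampleSetᶜ := by
      rintro x ⟨⟨hx1, hx2⟩, hx3⟩
      refine ⟨⟨by linarith, hx2⟩, fun hmem => ?_⟩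
      rcases mem_exampleSet_cases hmem (by linarith) (le_trans hx2 ht3) with h | h
      · linarith
      · exact hx3 h
    calc ENNReal.ofReal (t - 2) = volume (Set.Ioc 2 t \ ({3} : Set ℝ)) := by
          rw [measure_diff_null (by simp), Real.volume_Ioc]
      _ ≤ _ := measure_mono hsub

lemma tau_eq {s : ℝ} (hs : s ∈ Set.Ico (0:ℝ) 2) :
    tauAlloc exampleXi exampleEta s = ((3 - s / 2 : ℝ) : EReal) := by
  obtain ⟨hs0, hs2⟩ := hs
  have ht0_2 : (2:ℝ) < 3 - s / 2 := by linarith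
  have ht0_3 : (3 - s / 2 : ℝ) ≤ 3 := by linarith
  apply le_antisymm
  · apply sInf_le
    refine ⟨3 - s / 2, ⟨by linarith, ?_⟩, rfl⟩
    rw [xi_eq hs0 hs2 ht0_2.le ht0_3, eta_eq hs0 hs2 ht0_2.le ht0_3,
      show (2:ENNReal) = ENNReal.ofReal 2 by norm_num, ← ENNReal.ofReal_mul (by norm_num)]
    apply ENNReal.ofReal_le_ofReal
    linarith
  · apply le_sInf
    rintro x ⟨t, ⟨hst, hle⟩, rfl⟩
    rw [EReal.coe_le_coe_iff]
    by_contra h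
    push_neg at h
    -- h : t < 3 - s/2 ; so t < 3
    have ht3 : t ≤ 3 := by linarith
    rcases le_or_gt t 2 with ht2 | ht2
    · -- then η = 0 but ξ > 0
      have heta : exampleEta (Set.Icc s t) = 0 := by
        rw [eta_apply]
        have hsub : Set.Icc s t ∩ exampleSetᶜ ⊆ ({2} : Set ℝ) := by
          rintro x ⟨hx1, hx2⟩
          have hx2' : x ≤ 2 := le_trans hx1.2 ht2
          rcases eq_or_lt_of_le hx2' with h' | h'
          · exact h'
          · exact absurd (Ico02_subset ⟨le_trans hs0 hx1.1, h'⟩) hx2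
        have := measure_mono (μ := volume) hsub
        simp only [Real.volume_singleton, nonpos_iff_eq_zero] at this
        simp [this]
      have hxi : ENNReal.ofReal (t - s) ≤ exampleXi (Set.Icc s t) := by
        rw [xi_apply]
        have hsub : Set.Ico s t ⊆ Set.Icc s t ∩ exampleSet := by
          rintro x ⟨hx1, hx2⟩
          exact ⟨⟨hx1, hx2.le⟩, Ico02_subset ⟨le_trans hs0 hx1, lt_of_lt_of_le hx2 ht2⟩⟩
        calc ENNReal.ofReal (t - s) = volume (Set.Ico s t) := by simp [Real.volume_Ico]
          _ ≤ _ := measure_mono hsub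
      have : ENNReal.ofReal (t - s) ≤ 0 := le_trans hxi (hle.trans_eq heta)
      simp only [nonpos_iff_eq_zero, ENNReal.ofReal_eq_zero] at this
      linarith
    · -- 2 < t ≤ 3
      rw [xi_eq hs0 hs2 ht2.le ht3, eta_eq hs0 hs2 ht2.le ht3,
        show (2:ENNReal) = ENNReal.ofReal 2 by norm_num, ← ENNReal.ofReal_mul (by norm_num),
        ENNReal.ofReal_le_ofReal_iff (by linarith)] at hle
      linarith

lemma map_g : Measure.map (fun s : ℝ => 3 - s / 2) volume = (2 : ENNReal) • volume := by
  have h : (fun s : ℝ => 3 - s / 2) = (fun x : ℝ => 3 + x) ∘ (fun s : ℝ => (-2⁻¹ : ℝ) * s) := by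
    funext s; simp; ring
  rw [h, ← Measure.map_map (show Measurable (fun x : ℝ => 3 + x) by fun_prop) (show Measurable (fun s : ℝ => (-2⁻¹:ℝ) * s) by fun_prop),
    Real.map_volume_mul_left (by norm_num : (-2⁻¹ : ℝ) ≠ 0)]
  have habs : |((-2⁻¹ : ℝ))⁻¹| = 2 := by norm_num
  rw [habs, Measure.map_smul, map_add_left_eq_self,
    show ENNReal.ofReal 2 = (2:ENNReal) by norm_num]

/-- The counterexample of Remark 3.1: for `s ∈ [0,2)` one has `τ(s) = 3 - s/2`, so the
image under `τ` of Lebesgue measure on `[0,2)` is twice Lebesgue measure on `(2,3]`;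
in particular it is not Lebesgue measure on the interval between `2` and `3`. -/
theorem counterexample_without_mutual_singularity :
    (∀ s ∈ Set.Ico (0 : ℝ) 2,
      tauAlloc exampleXi exampleEta s = ((3 - s / 2 : ℝ) : EReal)) ∧
    (∀ C : Set ℝ, MeasurableSet C →
      volume {s ∈ Set.Ico (0 : ℝ) 2 | tauAlloc exampleXi exampleEta s ∈ Real.toEReal '' C}
        = 2 * volume (C ∩ Set.Ioc (2 : ℝ) 3)) ∧
    (∃ C : Set ℝ, MeasurableSet C ∧
      volume {s ∈ Set.Ico (0 : ℝ) 2 | tauAlloc exampleXi exampleEta s ∈ Real.toEReal '' C}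
        ≠ volume (C ∩ Set.Ioc (2 : ℝ) 3)) := by
  have key : ∀ C : Set ℝ, MeasurableSet C →
      volume {s ∈ Set.Ico (0 : ℝ) 2 | tauAlloc exampleXi exampleEta s ∈ Real.toEReal '' C}
        = 2 * volume (C ∩ Set.Ioc (2 : ℝ) 3) := by
    intro C hC
    have hset : {s ∈ Set.Ico (0 : ℝ) 2 | tauAlloc exampleXi exampleEta s ∈ Real.toEReal '' C}
        = (fun s : ℝ => 3 - s / 2) ⁻¹' (C ∩ Set.Ioc (2:ℝ) 3) := by
      ext s
      simp only [Set.mem_setOf_eq, Set.mem_preimage, Set.mem_inter_iff, Set.mem_Ioc]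
      constructor
      · rintro ⟨hs, hmem⟩
        rw [tau_eq hs] at hmem
        obtain ⟨c, hc, hceq⟩ := hmem
        have : c = 3 - s / 2 := by exact_mod_cast hceq
        subst this
        obtain ⟨hs0, hs2⟩ := hs
        exact ⟨hc, by constructor <;> linarith⟩
      · rintro ⟨hc, h2, h3⟩
        have hs : s ∈ Set.Ico (0:ℝ) 2 := ⟨by linarith, by linarith⟩
        refine ⟨hs, ?_⟩
        rw [tau_eq hs]
        exact ⟨3 - s / 2, hc, rfl⟩
    rw [hset, ← Measure.map_apply (by measurability) (hC.inter measurableSet_Ioc), map_g]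
    rfl
  refine ⟨fun s hs => tau_eq hs, key, Set.Ioc 2 3, measurableSet_Ioc, ?_⟩
  rw [key _ measurableSet_Ioc, Set.inter_self, Real.volume_Ioc,
    show (3:ℝ) - 2 = 1 by norm_num, ENNReal.ofReal_one]
  norm_num
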